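/- arXiv:1408.0528 — 3 statements merged into one kernel-verified Lean document; each statement's English description precedes it below -/
import Mathlib

section
/- Reduction of regular path queries to reachability (graph form of the paper's intersection lemma): for every edge-labeled directed graph (V, E) over Γ, every DFA M over Γ, and all vertices u, v, there exists a word w accepted by M together with a w-labeled path from u to v in (V, E) if and only if there exists an accepting state q_f ∈ M.accept such that (v, q_f) is reachable from (u, M.start) in the product graph of (V, E) with M. -/
/-! A path in the product graph is a labeled path of `E` read in lockstep by `M`: along a
`w`-labeled path started in state `q`, the automaton component ends in `M.evalFrom q w`. -/

/-- A `w`-labeled path from `u` to `v` in an edge-labeled directed graph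
with edge relation `E : V → Γ → V → Prop`. -/
inductive LabeledPath {V Γ : Type*} (E : V → Γ → V → Prop) : V → List Γ → V → Prop
  | nil (u : V) : LabeledPath E u [] u
  | cons {u x v : V} {a : Γ} {w : List Γ} (h : E u a x) (p : LabeledPath E x w v) :
      LabeledPath E u (a :: w) v

/-- The edge relation of the product graph of an edge-labeled directed graph
with a DFA: there is an edge from `(u, q)` to `(v, q')` iff there is a letter `a`
with `E u a v` and `M.step q a = q'`. -/
def ProdEdge {V Γ σ : Type*} (E : V → Γ → V → Prop) (M : DFA Γ σ) :
    V × σ → V × σ → Prop :=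
  fun p p' => ∃ a : Γ, E p.1 a p'.1 ∧ M.step p.2 a = p'.2

section ProductGraph

open Relation

variable {V Γ σ : Type*} {E : V → Γ → V → Prop} (M : DFA Γ σ)

theorem LabeledPath.reflTransGen_prodEdge {u v : V} {w : List Γ} (p : LabeledPath E u w v)
    (q : σ) : ReflTransGen (ProdEdge E M) (u, q) (v, M.evalFrom q w) := by
  induction p generalizing q with
  | nil u => exact .refl
  | cons h _ ih => exact .head ⟨_, h, rfl⟩ (ih _)

theorem exists_labeledPath_of_reflTransGen_prodEdge {p p' : V × σ}
    (h : ReflTransGen (ProdEdge E M) p p') :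
    ∃ w : List Γ, LabeledPath E p.1 w p'.1 ∧ M.evalFrom p.2 w = p'.2 := by
  induction h using ReflTransGen.head_induction_on with
  | refl => exact ⟨[], .nil _, rfl⟩
  | head edge _ ih =>
    obtain ⟨a, hE, hstep⟩ := edge
    obtain ⟨w, hpath, heval⟩ := ih
    exact ⟨a :: w, .cons hE hpath, by rw [DFA.evalFrom_cons, hstep, heval]⟩

theorem reflTransGen_prodEdge_iff {u v : V} {q q' : σ} :
    ReflTransGen (ProdEdge E M) (u, q) (v, q') ↔
      ∃ w : List Γ, LabeledPath E u w v ∧ M.evalFrom q w = q' := by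
  refine ⟨exists_labeledPath_of_reflTransGen_prodEdge M, ?_⟩
  rintro ⟨w, hpath, rfl⟩
  exact hpath.reflTransGen_prodEdge M q

end ProductGraph

theorem regularPathQuery_iff_reachability {V Γ σ : Type*}
    (E : V → Γ → V → Prop) (M : DFA Γ σ) (u v : V) :
    (∃ w : List Γ, w ∈ M.accepts ∧ LabeledPath E u w v) ↔
      ∃ qf ∈ M.accept,
        Relation.ReflTransGen (ProdEdge E M) (u, M.start) (v, qf) := by
  simp_rw [reflTransGen_prodEdge_iff, DFA.mem_accepts, DFA.eval]
  constructor
  · rintro ⟨w, haccept, hpath⟩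
    exact ⟨_, haccept, w, hpath, rfl⟩
  · rintro ⟨_, haccept, w, hpath, rfl⟩
    exact ⟨w, haccept, hpath⟩
end

section
/- Unsafe state pairs of the minimal DFA transfer to every equivalent DFA (core of the paper's lemma that a query is safe iff its minimal DFA is safe): let M and M' be DFAs over Γ accepting the same language, such that every state of M' is reachable from M'.start and distinct states of M' have distinct right languages. Suppose q1', q2' are states of M' and W1, W2 ⊆ List Γ are sets of words such that some w ∈ W1 satisfies M'.evalFrom q1' w = q2', while no w' ∈ W2 satisfies M'.evalFrom q1' w' = q2'. Then there exist states q1 and q2 of M, equivalent to q1' and q2' respectively, such that some w ∈ W1 satisfies M.evalFrom q1 w = q2 and no w' ∈ W2 satisfies M.evalFrom q1 w' = q2. -/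
/-!
Equivalent states of two DFAs stay equivalent along any word, since the right language of
`evalFrom q v` is the left quotient by `v` of the right language of `q`. A state of `M`
equivalent to `q1'` exists because `q1'` is reachable by some `u` and `M`, `M'` accept the
same language; following a word `w ∈ W1` from it reaches a state equivalent to `q2'`. If some
`w' ∈ W2` also led there in `M`, then `M'.evalFrom q1' w'` and `q2'` would have equal right
languages, hence coincide in the minimal `M'`.
-/

/-- The right language of a state `q` of a DFA `M`:
the set of words `w` with `M.evalFrom q w ∈ M.accept`. -/
def rightLang {Γ σ : Type*} (M : DFA Γ σ) (q : σ) : Language Γ :=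
  {w | M.evalFrom q w ∈ M.accept}

section RightLang

variable {Γ σ σ' : Type*} (M : DFA Γ σ) (M' : DFA Γ σ')

theorem rightLang_evalFrom (q : σ) (v : List Γ) :
    rightLang M (M.evalFrom q v) = (rightLang M q).leftQuotient v := by
  ext w
  show M.evalFrom (M.evalFrom q v) w ∈ M.accept ↔ M.evalFrom q (v ++ w) ∈ M.accept
  rw [DFA.evalFrom_of_append]

theorem rightLang_eval (u : List Γ) : rightLang M (M.eval u) = M.accepts.leftQuotient u :=
  (Language.leftQuotient_accepts_apply M u).symm

variable {M M'}

theorem rightLang_eval_eq_of_accepts_eq (hlang : M.accepts = M'.accepts) (u : List Γ) :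
    rightLang M (M.eval u) = rightLang M' (M'.eval u) := by
  rw [rightLang_eval, rightLang_eval, hlang]

theorem rightLang_evalFrom_eq_of_rightLang_eq {q : σ} {q' : σ'}
    (hq : rightLang M q = rightLang M' q') (v : List Γ) :
    rightLang M (M.evalFrom q v) = rightLang M' (M'.evalFrom q' v) := by
  rw [rightLang_evalFrom, rightLang_evalFrom, hq]

theorem exists_unsafe_target_of_rightLang_eq (hmin : Function.Injective (rightLang M'))
    {q1 : σ} {q1' q2' : σ'} (hq1 : rightLang M q1 = rightLang M' q1')
    {W1 W2 : Set (List Γ)} (h1 : ∃ w ∈ W1, M'.evalFrom q1' w = q2')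
    (h2 : ∀ w' ∈ W2, M'.evalFrom q1' w' ≠ q2') :
    ∃ q2 : σ, rightLang M q2 = rightLang M' q2' ∧
      (∃ w ∈ W1, M.evalFrom q1 w = q2) ∧ ∀ w' ∈ W2, M.evalFrom q1 w' ≠ q2 := by
  obtain ⟨w, hwW1, rfl⟩ := h1
  refine ⟨M.evalFrom q1 w, rightLang_evalFrom_eq_of_rightLang_eq hq1 w, ⟨w, hwW1, rfl⟩, ?_⟩
  intro w' hw'W2 hw'
  apply h2 w' hw'W2 (hmin _)
  rw [← rightLang_evalFrom_eq_of_rightLang_eq hq1, hw', rightLang_evalFrom_eq_of_rightLang_eq hq1]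

end RightLang

theorem unsafe_pair_transfers {Γ σ σ' : Type*} (M : DFA Γ σ) (M' : DFA Γ σ')
    (hlang : M.accepts = M'.accepts)
    (hreach : ∀ q' : σ', ∃ w : List Γ, q' = M'.evalFrom M'.start w)
    (hmin : ∀ s1 s2 : σ', rightLang M' s1 = rightLang M' s2 → s1 = s2)
    (q1' q2' : σ') (W1 W2 : Set (List Γ))
    (h1 : ∃ w ∈ W1, M'.evalFrom q1' w = q2')
    (h2 : ∀ w' ∈ W2, M'.evalFrom q1' w' ≠ q2') :
    ∃ q1 q2 : σ,
      rightLang M q1 = rightLang M' q1' ∧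
      rightLang M q2 = rightLang M' q2' ∧
      (∃ w ∈ W1, M.evalFrom q1 w = q2) ∧
      (∀ w' ∈ W2, M.evalFrom q1 w' ≠ q2) := by
  obtain ⟨u, rfl⟩ := hreach q1'
  have hq1 : rightLang M (M.eval u) = rightLang M' (M'.eval u) :=
    rightLang_eval_eq_of_accepts_eq hlang u
  obtain ⟨q2, hq2, hW1, hW2⟩ :=
    exists_unsafe_target_of_rightLang_eq hmin hq1 h1 h2
  exact ⟨M.eval u, q2, hq1, hq2, hW1, hW2⟩
end

section
/- Correctness of the index-plus-reachability decomposition for queries of the form (_)* a1 (_)* a2 (_)* … (_)* ak (_)*: for an edge-labeled directed graph (V, E) over Γ, letters a1, …, ak ∈ Γ, and vertices u, v, there exists a word w and a w-labeled path from u to v such that the list [a1, …, ak] is a sublist (i.e., a not necessarily contiguous subsequence) of w, if and only if there exist vertices u_1, v_1, …, u_k, v_k such that E u_i a_i v_i for each i, u reaches u_1, v_i reaches u_{i+1} for each i < k, and v_k reaches v. -/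
/-- `u` reaches `v` in the edge-labeled directed graph `E`. -/
def Reaches {V Γ : Type*} (E : V → Γ → V → Prop) : V → V → Prop :=
  Relation.ReflTransGen (fun x y => ∃ a : Γ, E x a y)

/-! Both sides are equivalent to the recursive condition `ReachesAlong`. A path whose word
contains `a₁ … aₖ` as a sublist splits at the occurrence of `a₁` used by the sublist, the stretch
before it witnessing reachability; conversely reachability witnesses are labeled paths, which
concatenate around the chosen edges. -/

section

variable {V Γ : Type*} {E : V → Γ → V → Prop}

namespace LabeledPath

theorem append {u x v : V} {w₁ w₂ : List Γ} (p : LabeledPath E u w₁ x)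
    (q : LabeledPath E x w₂ v) : LabeledPath E u (w₁ ++ w₂) v := by
  induction p with
  | nil => exact q
  | cons h _ ih => exact .cons h (ih q)

theorem reaches {u v : V} {w : List Γ} (p : LabeledPath E u w v) : Reaches E u v := by
  induction p with
  | nil => exact .refl
  | cons h _ ih => exact .head ⟨_, h⟩ ih

theorem exists_of_cons_sublist {u v : V} {w : List Γ} (p : LabeledPath E u w v) {a : Γ}
    {as : List Γ} (h : (a :: as).Sublist w) :
    ∃ x y w', Reaches E u x ∧ E x a y ∧ LabeledPath E y w' v ∧ as.Sublist w' := by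
  induction p with
  | nil => simp at h
  | cons e p ih =>
    cases h with
    | cons _ h =>
      obtain ⟨x, y, w', hux, hxy, p', hs⟩ := ih h
      exact ⟨x, y, w', .head ⟨_, e⟩ hux, hxy, p', hs⟩
    | cons_cons _ h => exact ⟨_, _, _, .refl, e, p, h⟩

end LabeledPath

theorem Reaches.exists_labeledPath {u v : V} (h : Reaches E u v) : ∃ w, LabeledPath E u w v := by
  induction h using Relation.ReflTransGen.head_induction_on with
  | refl => exact ⟨[], .nil _⟩
  | head h _ ih =>
    obtain ⟨a, e⟩ := h
    obtain ⟨w, p⟩ := ih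
    exact ⟨a :: w, .cons e p⟩

def ReachesAlong (E : V → Γ → V → Prop) : List Γ → V → V → Prop
  | [], u, v => Reaches E u v
  | a :: as, u, v => ∃ x y, Reaches E u x ∧ E x a y ∧ ReachesAlong E as y v

theorem reachesAlong_iff_exists_labeledPath_sublist {as : List Γ} {u v : V} :
    ReachesAlong E as u v ↔ ∃ w, LabeledPath E u w v ∧ as.Sublist w := by
  induction as generalizing u with
  | nil =>
    exact ⟨fun h => (h.exists_labeledPath.imp fun w p => ⟨p, List.nil_sublist w⟩),
      fun ⟨_, p, _⟩ => p.reaches⟩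
  | cons a as ih =>
    constructor
    · rintro ⟨x, y, hux, hxy, hyv⟩
      obtain ⟨w₁, p₁⟩ := hux.exists_labeledPath
      obtain ⟨w₂, p₂, hs⟩ := ih.1 hyv
      exact ⟨w₁ ++ a :: w₂, p₁.append (.cons hxy p₂),
        (hs.cons_cons a).trans (List.sublist_append_right _ _)⟩
    · rintro ⟨w, p, hs⟩
      obtain ⟨x, y, w', hux, hxy, p', hs'⟩ := p.exists_of_cons_sublist hs
      exact ⟨x, y, hux, hxy, ih.2 ⟨w', p', hs'⟩⟩

-- Indices are shifted by one: `uu i` and `vv i` are the paper's `u_{i+1}` and `v_{i+1}`.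
def IsEdgeChain (E : V → Γ → V → Prop) (as : List Γ) (u v : V) (uu vv : ℕ → V) : Prop :=
  (∀ (i : ℕ) (h : i < as.length), E (uu i) as[i] (vv i)) ∧
    ∀ i ≤ as.length,
      Reaches E (if i = 0 then u else vv (i - 1)) (if i = as.length then v else uu i)

theorem isEdgeChain_nil {u v : V} {uu vv : ℕ → V} :
    IsEdgeChain E [] u v uu vv ↔ Reaches E u v := by
  simp [IsEdgeChain]

theorem isEdgeChain_cons {a : Γ} {as : List Γ} {u v : V} {uu vv : ℕ → V} :
    IsEdgeChain E (a :: as) u v uu vv ↔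
      Reaches E u (uu 0) ∧ E (uu 0) a (vv 0) ∧
        IsEdgeChain E as (vv 0) v (fun i => uu (i + 1)) (fun i => vv (i + 1)) := by
  have hstart : ∀ i, (if i = 0 then vv 0 else vv (i - 1 + 1)) = vv i := by
    rintro (_ | i) <;> rfl
  simp only [IsEdgeChain, List.length_cons, ← Nat.lt_succ_iff, Nat.forall_lt_succ_left', hstart,
    Nat.add_right_cancel_iff, ↓reduceIte, Nat.succ_ne_zero, Nat.add_sub_cancel, eq_comm (a := 0)]
  tauto

theorem reachesAlong_iff_exists_isEdgeChain {as : List Γ} {u v : V} :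
    ReachesAlong E as u v ↔ ∃ uu vv, IsEdgeChain E as u v uu vv := by
  induction as generalizing u with
  | nil => exact ⟨fun h => ⟨fun _ => u, fun _ => u, isEdgeChain_nil.2 h⟩,
      fun ⟨_, _, h⟩ => isEdgeChain_nil.1 h⟩
  | cons a as ih =>
    constructor
    · rintro ⟨x, y, hux, hxy, hyv⟩
      obtain ⟨uu, vv, h⟩ := ih.1 hyv
      exact ⟨fun | 0 => x | i + 1 => uu i, fun | 0 => y | i + 1 => vv i,
        isEdgeChain_cons.2 ⟨hux, hxy, h⟩⟩
    · rintro ⟨uu, vv, h⟩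
      obtain ⟨hux, hxy, h'⟩ := isEdgeChain_cons.1 h
      exact ⟨_, _, hux, hxy, ih.2 ⟨_, _, h'⟩⟩

end

/-- Correctness of the index-plus-reachability decomposition for queries of the
form `(_)* a₁ (_)* a₂ (_)* … (_)* aₖ (_)*`, whose language is the set of words
having `[a₁, …, aₖ]` as a (not necessarily contiguous) sublist.  The chain
condition: `u` reaches `u₁`, `E uᵢ aᵢ vᵢ`, `vᵢ` reaches `u_{i+1}`, and `vₖ`
reaches `v` (for `k = 0` it degenerates to `u` reaches `v`). -/
theorem ifq_decomposition {V Γ : Type*} (E : V → Γ → V → Prop)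
    (as : List Γ) (u v : V) :
    (∃ w : List Γ, LabeledPath E u w v ∧ as.Sublist w) ↔
      ∃ uu vv : ℕ → V,
        (∀ (i : ℕ) (h : i < as.length), E (uu i) as[i] (vv i)) ∧
        (∀ i ≤ as.length,
          Reaches E (if i = 0 then u else vv (i - 1))
            (if i = as.length then v else uu i)) :=
  reachesAlong_iff_exists_labeledPath_sublist.symm.trans reachesAlong_iff_exists_isEdgeChain
end
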